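/- arXiv:2208.14155 — 2 statements merged into one kernel-verified Lean document; each statement's English description precedes it below -/
import Mathlib

section
/- Let (M, ω) be a presymplectic finite-dimensional vector space with kernel K and a chosen complement W (M = W ⊕ K). Define Ω on M ⊕ K* by Ω((m,ρ),(m',ρ')) = ω(m,m') + ρ(k') − ρ'(k), where k, k' are the K-components of m, m'. Then Ω is a symplectic (antisymmetric, nondegenerate) bilinear form on M ⊕ K*, and its restriction to M ⊕ {0} equals ω. -/
/-!
Pairing `ρ` against the `K`-component of the other vector makes every direction of `K` (the
degenerate directions of `ω`) dual to a direction of `K*`. If `(m, ρ)` is `Ω`-orthogonal to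
everything, testing against `(0, φ)` gives `π m = 0`, testing against `(k, 0)` with `k ∈ K` gives
`ρ k = 0` (since `ω m k = 0`), and then testing against `(m', 0)` gives `ω m = 0`, i.e. `m ∈ K`,
so `m = π m = 0`.
-/

open Module

namespace LinearMap

variable {𝕜 M : Type*} [Field 𝕜] [AddCommGroup M] [Module 𝕜 M]

lemma apply_eq_zero_of_mem_ker_of_antisymm {ω : M →ₗ[𝕜] M →ₗ[𝕜] 𝕜}
    (hanti : ∀ u v, ω u v = -ω v u) (m : M) {k : M} (hk : k ∈ ker ω) : ω m k = 0 := by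
  rw [hanti, mem_ker.mp hk, zero_apply, neg_zero]

def extendByDual (ω : M →ₗ[𝕜] M →ₗ[𝕜] 𝕜) {K : Submodule 𝕜 M} (π : M →ₗ[𝕜] K)
    (p q : M × Dual 𝕜 K) : 𝕜 :=
  ω p.1 q.1 + p.2 (π q.1) - q.2 (π p.1)

variable {ω : M →ₗ[𝕜] M →ₗ[𝕜] 𝕜}

lemma extendByDual_antisymm (hanti : ∀ u v, ω u v = -ω v u) {K : Submodule 𝕜 M}
    (π : M →ₗ[𝕜] K) (p q : M × Dual 𝕜 K) : extendByDual ω π p q = -extendByDual ω π q p := by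
  rw [extendByDual, extendByDual, hanti p.1 q.1]
  ring

@[simp]
lemma extendByDual_zero_zero {K : Submodule 𝕜 M} (π : M →ₗ[𝕜] K) (m m' : M) :
    extendByDual ω π (m, 0) (m', 0) = ω m m' := by
  simp [extendByDual]

lemma eq_zero_of_forall_extendByDual_eq_zero (hanti : ∀ u v, ω u v = -ω v u)
    (π : M →ₗ[𝕜] ker ω) (hπ : ∀ k : ker ω, π k = k) (p : M × Dual 𝕜 (ker ω))
    (h : ∀ q, extendByDual ω π p q = 0) : p = 0 := by
  obtain ⟨m, ρ⟩ := p
  have hπm : π m = 0 := by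
    refine (forall_dual_apply_eq_zero_iff 𝕜 _).mp fun φ => ?_
    simpa [extendByDual] using h (0, φ)
  have hρ : ρ = 0 := by
    ext k
    simpa [extendByDual, hπm, hπ, apply_eq_zero_of_mem_ker_of_antisymm hanti m k.2]
      using h (k, 0)
  have hmK : m ∈ ker ω := mem_ker.mpr <| ext fun m' => by
    simpa [extendByDual, hπm, hρ] using h (m', 0)
  have hm : m = 0 := by
    simpa [hπ ⟨m, hmK⟩] using congrArg Subtype.val hπm
  simp [hm, hρ]

end LinearMap

theorem stmt3_general (M : Type*) [AddCommGroup M] [Module ℝ M]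
    (ω : M →ₗ[ℝ] M →ₗ[ℝ] ℝ) (hanti : ∀ u v, ω u v = - ω v u)
    (W : Submodule ℝ M) (hcompl : IsCompl (LinearMap.ker ω) W) :
    let K := LinearMap.ker ω
    let π : M →ₗ[ℝ] K := K.linearProjOfIsCompl W hcompl
    let Ω : (M × Module.Dual ℝ K) → (M × Module.Dual ℝ K) → ℝ :=
      fun p q => ω p.1 q.1 + p.2 (π q.1) - q.2 (π p.1)
    (∀ p q, Ω p q = - Ω q p) ∧
      (∀ p, (∀ q, Ω p q = 0) → p = 0) ∧
      (∀ m m' : M, Ω (m, 0) (m', 0) = ω m m') := by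
  intro K π Ω
  exact ⟨LinearMap.extendByDual_antisymm hanti π,
    LinearMap.eq_zero_of_forall_extendByDual_eq_zero hanti π
      (Submodule.projectionOnto_apply_left hcompl),
    LinearMap.extendByDual_zero_zero π⟩

/-- Let `(M, ω)` be a presymplectic finite-dimensional real vector space with
kernel `K = LinearMap.ker ω` and a chosen complement `W` (so `M = W ⊕ K`).  Let
`π : M →ₗ K` be the projection onto `K` along `W`.  Define `Ω` on `M ⊕ K*` by
`Ω((m,ρ),(m',ρ')) = ω(m,m') + ρ(π m') − ρ'(π m)`.  Then `Ω` is antisymmetric and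
nondegenerate (symplectic) on `M ⊕ K*`, and its restriction to `M ⊕ {0}` equals `ω`. -/
theorem stmt3 (M : Type*) [AddCommGroup M] [Module ℝ M] [FiniteDimensional ℝ M]
    (ω : M →ₗ[ℝ] M →ₗ[ℝ] ℝ) (hanti : ∀ u v, ω u v = - ω v u)
    (W : Submodule ℝ M) (hcompl : IsCompl (LinearMap.ker ω) W) :
    let K := LinearMap.ker ω
    let π : M →ₗ[ℝ] K := K.linearProjOfIsCompl W hcompl
    let Ω : (M × Module.Dual ℝ K) → (M × Module.Dual ℝ K) → ℝ :=
      fun p q => ω p.1 q.1 + p.2 (π q.1) - q.2 (π p.1)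
    (∀ p q, Ω p q = - Ω q p) ∧
      (∀ p, (∀ q, Ω p q = 0) → p = 0) ∧
      (∀ m m' : M, Ω (m, 0) (m', 0) = ω m m') :=
  stmt3_general M ω hanti W hcompl
end

section
/- With ω as above on N = SU(2) × ℝ², the kernel of ω at each point is one-dimensional, spanned by the vector field X₃ dual to θ₃ (the third left-invariant vector field lifted to N, with zero α₁, α₂ components); hence ω is presymplectic of constant rank 4 on the 5-dimensional manifold N. -/
/-- With `ω = (dα₁ − α₂θ₃) ∧ θ₁ + (dα₂ + α₁θ₃) ∧ θ₂ − n θ₁ ∧ θ₂` on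
`N = SU(2) × ℝ²`, the kernel of `ω` at each point is one-dimensional, spanned by the
vector field `X₃` dual to `θ₃` (the third left-invariant vector field lifted to `N`, with
zero components along the vertical directions); hence `ω` is presymplectic of constant
rank `4` on the 5-dimensional manifold `N`.

Pointwise formulation: the tangent space at any point of `N` is identified with `ℝ⁵`
via the coframe `(θ₁, θ₂, θ₃, dα₁ − α₂θ₃, dα₂ + α₁θ₃)`, in which `ω` reads
`ω(v,w) = v₄w₁ − w₄v₁ + v₅w₂ − w₅v₂ − n(v₁w₂ − w₁v₂)` and the lift of `X₃` is
`e₃ = (0,0,1,0,0)`. -/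
theorem stmt8 (n : ℝ) :
    let ωf : (Fin 5 → ℝ) → (Fin 5 → ℝ) → ℝ := fun v w =>
      (v 3 * w 0 - w 3 * v 0) + (v 4 * w 1 - w 4 * v 1)
        - n * (v 0 * w 1 - w 0 * v 1)
    let e3 : Fin 5 → ℝ := Pi.single 2 1
    {v : Fin 5 → ℝ | ∀ w, ωf v w = 0} = (Submodule.span ℝ {e3} : Set (Fin 5 → ℝ)) ∧
      Module.finrank ℝ (Submodule.span ℝ {e3}) = 1 ∧
      Module.finrank ℝ (Fin 5 → ℝ) - Module.finrank ℝ (Submodule.span ℝ {e3}) = 4 := by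
  intro ωf e3
  have he3 : e3 ≠ 0 := by
    intro h
    have := congrFun h 2
    simp [e3, Pi.single_apply] at this
  refine ⟨?_, ?_, ?_⟩
  · ext v
    simp only [Set.mem_setOf_eq, SetLike.mem_coe, Submodule.mem_span_singleton]
    constructor
    · intro h
      have h0 := h (Pi.single 3 1)
      have h1 := h (Pi.single 4 1)
      have h2 := h (Pi.single 0 1)
      have h3 := h (Pi.single 1 1)
      simp only [ωf, Pi.single_apply] at h0 h1 h2 h3
      norm_num at h0 h1 h2 h3
      refine ⟨v 2, ?_⟩
      funext i
      fin_cases i <;> simp_all [e3, Pi.single_apply]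
    · rintro ⟨c, rfl⟩ w
      simp [ωf, e3, Pi.single_apply]
  · rw [finrank_span_singleton he3]
  · rw [finrank_span_singleton he3]
    simp
end
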